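/- arXiv:2502.04749 — 6 statements merged into one kernel-verified Lean document; each statement's English description precedes it below -/
import Mathlib

section
/- Let d = 1, let L ≥ 1 be the number of users with user ℓ contributing m_ℓ ≥ 1 samples, let U > 0 and ε > 0, and let T be the ⌈2/ε⌉-th largest value of the multiset {U·m_1, …, U·m_L} (with T := 0 if ⌈2/ε⌉ > L). Then the clipping strategy defined by a_j^{(ℓ)} := max{(U·m_ℓ − T)/(2 m_ℓ), 0} and b_j^{(ℓ)} := min{(U·m_ℓ + T)/(2 m_ℓ), U} for all ℓ ∈ [L], j ∈ [m_ℓ] is admissible (i.e., 0 ≤ a_j^{(ℓ)} ≤ b_j^{(ℓ)} ≤ U) and minimizes the worst-case error functional E^{(1)} over all admissible clipping strategies: for every admissible family {a_j^{(ℓ)}, b_j^{(ℓ)}}, E^{(1)}({a_j^{(ℓ)}, b_j^{(ℓ)}}) is at least the value of E^{(1)} at this strategy. -/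
open Finset

noncomputable def kthLargest {L : ℕ} (v : Fin L → ℝ) (k : ℕ) : ℝ :=
  (((Finset.univ.val.map v).sort (· ≤ ·)).reverse).getD (k - 1) 0

/-- An admissible clipping strategy: `0 ≤ a ℓ j ≤ b ℓ j ≤ U` for every user `ℓ`
and sample index `j`. -/
def Admissible {L : ℕ} (m : Fin L → ℕ) (U : ℝ)
    (a b : (ℓ : Fin L) → Fin (m ℓ) → ℝ) : Prop :=
  ∀ ℓ j, 0 ≤ a ℓ j ∧ a ℓ j ≤ b ℓ j ∧ b ℓ j ≤ U

/-- The worst-case error functional `E^(1)` of a clipping strategy (dimension `d = 1`). -/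
noncomputable def E1 {L : ℕ} (m : Fin L → ℕ) (U ε : ℝ)
    (a b : (ℓ : Fin L) → Fin (m ℓ) → ℝ) : ℝ :=
  (1 / ∑ ℓ, (m ℓ : ℝ)) *
    ((∑ ℓ, ∑ j, max (a ℓ j) (U - b ℓ j)) +
      (1 / ε) * sSup (Set.range fun ℓ => ∑ j, (b ℓ j - a ℓ j)))

/-!
Averaging gives `max a (U - b) ≥ (U - (b - a)) / 2`, and user `ℓ`'s total width `∑ j, (b - a)`
is at most `min S (U m_ℓ)`, where `S` is the largest total width (the sensitivity). Hence every
admissible strategy of sensitivity `S` has error at least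
`F(S) / M`, `F(S) = ∑ ℓ, (U m_ℓ - min S (U m_ℓ)) / 2 + S / ε`, and the given strategy is the
symmetric one, `(U ∓ min T (U m_ℓ) / m_ℓ) / 2`, which attains `F(T) / M`. Minimising `F` means
maximising the concave piecewise linear `S ↦ ∑ ℓ, min S (U m_ℓ) - (2 / ε) S`, whose slope is
`#{ℓ | S < U m_ℓ} - 2 / ε`; it changes sign at the `⌈2 / ε⌉`-th largest `U m_ℓ`, that is at `T`.
-/

namespace List.SortedGE

variable {α : Type*} [LinearOrder α] {l : List α}

theorem countP_getElem_lt_le (hl : l.SortedGE) (i : ℕ) (hi : i < l.length) :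
    l.countP (fun x => l[i] < x) ≤ i := by
  have hdrop : (l.drop i).countP (fun x => l[i] < x) = 0 := by
    refine List.countP_eq_zero.2 fun a ha => ?_
    obtain ⟨j, hj, rfl⟩ := List.mem_drop_iff_getElem.1 ha
    simpa using hl.getElem_ge_getElem_of_le (Nat.le_add_right i j)
  calc l.countP (fun x => l[i] < x)
      = (l.take i).countP (fun x => l[i] < x) + (l.drop i).countP (fun x => l[i] < x) := by
        rw [← List.countP_append, List.take_append_drop]
    _ ≤ (l.take i).length := by rw [hdrop, add_zero]; exact List.countP_le_length
    _ ≤ i := List.length_take_le i l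

theorem lt_countP_getElem_le (hl : l.SortedGE) (i : ℕ) (hi : i < l.length) :
    i < l.countP (fun x => l[i] ≤ x) := by
  have htake : (l.take (i + 1)).countP (fun x => l[i] ≤ x) = i + 1 := by
    rw [List.countP_eq_length.2, List.length_take_of_le hi]
    intro a ha
    obtain ⟨j, hj, rfl⟩ := List.mem_take_iff_getElem.1 ha
    simpa using hl.getElem_ge_getElem_of_le (by omega : j ≤ i)
  have := (List.take_sublist (i + 1) l).countP_le (p := fun x => l[i] ≤ x)
  omega

end List.SortedGE

section kthLargest

variable {L : ℕ} (v : Fin L → ℝ)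

theorem sortedGE_reverse_sort_map :
    (((univ.val.map v).sort (· ≤ ·)).reverse).SortedGE :=
  (Multiset.pairwise_sort _ _).sortedLE.reverse

theorem card_filter_eq_countP_reverse_sort (p : ℝ → Prop) [DecidablePred p] :
    #{ℓ | p (v ℓ)} = (((univ.val.map v).sort (· ≤ ·)).reverse).countP (fun x => p x) := by
  rw [List.countP_reverse, ← Multiset.coe_countP, Multiset.sort_eq, Multiset.countP_map]
  rfl

theorem kthLargest_eq_getElem {k : ℕ} (hk : 1 ≤ k) (hkL : k ≤ L) :
    kthLargest v k = (((univ.val.map v).sort (· ≤ ·)).reverse)[k - 1]'(by simp; omega) :=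
  List.getD_eq_getElem _ _ _

theorem kthLargest_of_lt {k : ℕ} (hLk : L < k) : kthLargest v k = 0 :=
  List.getD_eq_default _ _ (by simp; omega)

theorem kthLargest_nonneg (hv : ∀ ℓ, 0 ≤ v ℓ) (k : ℕ) : 0 ≤ kthLargest v k := by
  rw [kthLargest, List.getD_eq_getElem?_getD]
  cases h : (((univ.val.map v).sort (· ≤ ·)).reverse)[k - 1]? with
  | none => exact le_rfl
  | some x =>
    obtain ⟨ℓ, -, rfl⟩ := Multiset.mem_map.1 <| (Multiset.mem_sort _).1 <|
      List.mem_reverse.1 (List.mem_of_getElem? h)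
    exact hv ℓ

theorem card_lt_kthLargest_lt {k : ℕ} (hk : 1 ≤ k) (hkL : k ≤ L) :
    #{ℓ | kthLargest v k < v ℓ} < k := by
  rw [card_filter_eq_countP_reverse_sort, kthLargest_eq_getElem v hk hkL]
  have := (sortedGE_reverse_sort_map v).countP_getElem_lt_le (k - 1) (by simp; omega)
  omega

theorem le_card_kthLargest_le {k : ℕ} (hk : 1 ≤ k) (hkL : k ≤ L) :
    k ≤ #{ℓ | kthLargest v k ≤ v ℓ} := by
  rw [card_filter_eq_countP_reverse_sort, kthLargest_eq_getElem v hk hkL]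
  have := (sortedGE_reverse_sort_map v).lt_countP_getElem_le (k - 1) (by simp; omega)
  omega

end kthLargest

section SumMin

variable {ι : Type*} [Fintype ι] (v : ι → ℝ) {S T : ℝ}

theorem sum_min_sub_sum_min_le (hTS : T ≤ S) :
    ∑ i, min S (v i) - ∑ i, min T (v i) ≤ #{i | T < v i} * (S - T) := by
  have hpt : ∀ i, min S (v i) - min T (v i) ≤ if T < v i then S - T else 0 := fun i => by
    split_ifs with h
    · linarith [min_le_left S (v i), min_eq_left h.le]
    · rw [min_eq_right (not_lt.1 h), min_eq_right ((not_lt.1 h).trans hTS), sub_self]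
  calc ∑ i, min S (v i) - ∑ i, min T (v i) ≤ ∑ i, if T < v i then S - T else 0 := by
        rw [← sum_sub_distrib]; exact sum_le_sum fun i _ => hpt i
    _ = #{i | T < v i} * (S - T) := by rw [sum_ite, sum_const, sum_const_zero, nsmul_eq_mul,
        add_zero]

theorem card_mul_le_sum_min_sub_sum_min (hST : S ≤ T) :
    #{i | T ≤ v i} * (T - S) ≤ ∑ i, min T (v i) - ∑ i, min S (v i) := by
  have hpt : ∀ i, (if T ≤ v i then T - S else 0) ≤ min T (v i) - min S (v i) := fun i => by
    split_ifs with h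
    · rw [min_eq_left h, min_eq_left (hST.trans h)]
    · linarith [min_le_min_right (v i) hST]
  calc (#{i | T ≤ v i} : ℝ) * (T - S) = ∑ i, if T ≤ v i then T - S else 0 := by
        rw [sum_ite, sum_const, sum_const_zero, nsmul_eq_mul, add_zero]
    _ ≤ ∑ i, min T (v i) - ∑ i, min S (v i) := by
        rw [← sum_sub_distrib]; exact sum_le_sum fun i _ => hpt i

end SumMin

theorem isMaxOn_sum_min_sub_mul_kthLargest {L : ℕ} (v : Fin L → ℝ) {c : ℝ} (hc : 0 < c) :
    IsMaxOn (fun S => ∑ ℓ, min S (v ℓ) - c * S) (Set.Ici 0) (kthLargest v ⌈c⌉₊) := by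
  set k := ⌈c⌉₊
  have hk : 1 ≤ k := Nat.one_le_ceil_iff.2 hc
  intro S (hS : 0 ≤ S)
  show ∑ ℓ, min S (v ℓ) - c * S ≤ ∑ ℓ, min (kthLargest v k) (v ℓ) - c * kthLargest v k
  rcases le_total (kthLargest v k) S with hTS | hST
  · have hlt : #{ℓ | kthLargest v k < v ℓ} + 1 ≤ k := by
      rcases le_or_gt k L with hkL | hLk
      · exact card_lt_kthLargest_lt v hk hkL
      · exact (card_filter_le _ _).trans_lt (by simpa using hLk)
    have hcard : (#{ℓ | kthLargest v k < v ℓ} : ℝ) ≤ c := by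
      have : (#{ℓ | kthLargest v k < v ℓ} : ℝ) + 1 ≤ k := by exact_mod_cast hlt
      linarith [Nat.ceil_lt_add_one hc.le]
    linarith [sum_min_sub_sum_min_le v hTS, mul_le_mul_of_nonneg_right hcard (sub_nonneg.2 hTS)]
  · rcases le_or_gt k L with hkL | hLk
    · have hcard : c ≤ #{ℓ | kthLargest v k ≤ v ℓ} :=
        (Nat.le_ceil c).trans (Nat.cast_le.2 (le_card_kthLargest_le v hk hkL))
      linarith [card_mul_le_sum_min_sub_sum_min v hST,
        mul_le_mul_of_nonneg_right hcard (sub_nonneg.2 hST)]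
    · rw [kthLargest_of_lt v hLk] at hST ⊢
      rw [le_antisymm hST hS]

theorem sSup_range_min_kthLargest {L : ℕ} (v : Fin L → ℝ) (hv : ∀ ℓ, 0 ≤ v ℓ) {k : ℕ}
    (hk : 1 ≤ k) : sSup (Set.range fun ℓ => min (kthLargest v k) (v ℓ)) = kthLargest v k := by
  refine le_antisymm (Real.sSup_le (by rintro _ ⟨ℓ, rfl⟩; exact min_le_left _ _)
    (kthLargest_nonneg v hv k)) ?_
  rcases le_or_gt k L with hkL | hLk
  · obtain ⟨ℓ, hℓ⟩ : ∃ ℓ, kthLargest v k ≤ v ℓ := by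
      simpa [Finset.Nonempty] using card_pos.1 (hk.trans (le_card_kthLargest_le v hk hkL))
    exact le_csSup (Set.finite_range _).bddAbove ⟨ℓ, min_eq_left hℓ⟩
  · rw [kthLargest_of_lt v hLk]
    exact Real.sSup_nonneg (by rintro _ ⟨ℓ, rfl⟩; exact le_min le_rfl (hv ℓ))

theorem max_sub_div_two_eq {U T c : ℝ} (hc : 0 < c) :
    max ((U * c - T) / (2 * c)) 0 = (U - min T (U * c) / c) / 2 := by
  rcases le_total T (U * c) with h | h
  · rw [min_eq_left h, max_eq_left (by apply div_nonneg <;> linarith)]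
    field_simp
  · rw [min_eq_right h, mul_div_cancel_right₀ U hc.ne', sub_self, zero_div,
      max_eq_right (div_nonpos_of_nonpos_of_nonneg (by linarith) (by linarith))]

theorem min_add_div_two_eq {U T c : ℝ} (hc : 0 < c) :
    min ((U * c + T) / (2 * c)) U = (U + min T (U * c) / c) / 2 := by
  rcases le_total T (U * c) with h | h
  · rw [min_eq_left h, min_eq_left (by rw [div_le_iff₀ (by positivity)]; linarith)]
    field_simp
  · rw [min_eq_right h, mul_div_cancel_right₀ U hc.ne', add_self_div_two,
      min_eq_right (by rw [le_div_iff₀ (by positivity)]; linarith)]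

section ClippingError

variable {L : ℕ} (m : Fin L → ℕ) (U ε : ℝ)

-- `F(S) / M` in the notation above.
noncomputable def thresholdError (S : ℝ) : ℝ :=
  (1 / ∑ ℓ, (m ℓ : ℝ)) * (∑ ℓ, (U * m ℓ - min S (U * m ℓ)) / 2 + (1 / ε) * S)

theorem thresholdError_sSup_le_E1 {a b : (ℓ : Fin L) → Fin (m ℓ) → ℝ}
    (h : Admissible m U a b) :
    thresholdError m U ε (sSup (Set.range fun ℓ => ∑ j, (b ℓ j - a ℓ j))) ≤ E1 m U ε a b := by
  set S := sSup (Set.range fun ℓ => ∑ j, (b ℓ j - a ℓ j))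
  have hwidth : ∀ ℓ, ∑ j, (b ℓ j - a ℓ j) ≤ min S (U * m ℓ) := fun ℓ =>
    le_min (le_csSup (Set.finite_range _).bddAbove ⟨ℓ, rfl⟩) <|
      calc ∑ j, (b ℓ j - a ℓ j) ≤ ∑ _j : Fin (m ℓ), U := sum_le_sum fun j _ => by
            obtain ⟨ha, -, hb⟩ := h ℓ j; linarith
        _ = U * m ℓ := by simp [mul_comm]
  have huser : ∀ ℓ, (U * m ℓ - min S (U * m ℓ)) / 2 ≤ ∑ j, max (a ℓ j) (U - b ℓ j) := by
    intro ℓ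
    calc (U * m ℓ - min S (U * m ℓ)) / 2 ≤ ∑ j : Fin (m ℓ), (U - (b ℓ j - a ℓ j)) / 2 := by
          rw [← sum_div, sum_sub_distrib, sum_const, card_univ, Fintype.card_fin, nsmul_eq_mul]
          linarith [hwidth ℓ]
      _ ≤ ∑ j, max (a ℓ j) (U - b ℓ j) := sum_le_sum fun j _ => by
          linarith [le_max_left (a ℓ j) (U - b ℓ j), le_max_right (a ℓ j) (U - b ℓ j)]
  unfold thresholdError E1
  gcongr ?_ * (?_ + _)
  exact sum_le_sum fun ℓ _ => huser ℓ

theorem E1_symmetric_min {T : ℝ} (hT : 0 ≤ T)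
    (hsup : sSup (Set.range fun ℓ => min T (U * m ℓ)) = T) :
    E1 m U ε (fun ℓ _ => (U - min T (U * m ℓ) / m ℓ) / 2)
      (fun ℓ _ => (U + min T (U * m ℓ) / m ℓ) / 2) = thresholdError m U ε T := by
  have hcancel : ∀ ℓ, (m ℓ : ℝ) * (min T (U * m ℓ) / m ℓ) = min T (U * m ℓ) := fun ℓ => by
    rw [mul_comm]
    exact div_mul_cancel_of_imp fun h => by simp [h, hT]
  have huser : ∀ ℓ, ∑ _j : Fin (m ℓ), max ((U - min T (U * m ℓ) / m ℓ) / 2)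
      (U - (U + min T (U * m ℓ) / m ℓ) / 2) = (U * m ℓ - min T (U * m ℓ)) / 2 := fun ℓ => by
    rw [sum_const, card_univ, Fintype.card_fin, nsmul_eq_mul,
      show U - (U + min T (U * m ℓ) / m ℓ) / 2 = (U - min T (U * m ℓ) / m ℓ) / 2 by ring,
      max_self]
    linear_combination (-1 / 2 : ℝ) * hcancel ℓ
  have hwidth : ∀ ℓ, ∑ _j : Fin (m ℓ), ((U + min T (U * m ℓ) / m ℓ) / 2 -
      (U - min T (U * m ℓ) / m ℓ) / 2) = min T (U * m ℓ) := fun ℓ => by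
    rw [sum_const, card_univ, Fintype.card_fin, nsmul_eq_mul]
    linear_combination hcancel ℓ
  simp only [E1, thresholdError, huser, hwidth, hsup]

theorem admissible_symmetric_min {T : ℝ} (hU : 0 ≤ U) (hT : 0 ≤ T) :
    Admissible m U (fun ℓ _ => (U - min T (U * m ℓ) / m ℓ) / 2)
      (fun ℓ _ => (U + min T (U * m ℓ) / m ℓ) / 2) := by
  intro ℓ j
  have hm : (0 : ℝ) < m ℓ := Nat.cast_pos.2 j.pos
  have hr : min T (U * m ℓ) / m ℓ ≤ U := div_le_of_le_mul₀ hm.le hU (min_le_right _ _)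
  have hr0 : 0 ≤ min T (U * m ℓ) / m ℓ := by positivity
  refine ⟨?_, ?_, ?_⟩ <;> linarith

theorem thresholdError_kthLargest_le (hε : 0 < ε) {S : ℝ} (hS : 0 ≤ S) :
    thresholdError m U ε (kthLargest (fun ℓ => U * m ℓ) ⌈2 / ε⌉₊) ≤ thresholdError m U ε S := by
  set T := kthLargest (fun ℓ => U * m ℓ) ⌈2 / ε⌉₊
  have hmax : ∑ ℓ, min S (U * m ℓ) - 2 / ε * S ≤ ∑ ℓ, min T (U * m ℓ) - 2 / ε * T :=
    isMaxOn_sum_min_sub_mul_kthLargest (fun ℓ => U * m ℓ) (div_pos two_pos hε) hS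
  unfold thresholdError
  gcongr ?_ * ?_
  simp only [← sum_div, sum_sub_distrib]
  linear_combination (1 / 2 : ℝ) * hmax

end ClippingError

theorem stmt0_general {L : ℕ} (m : Fin L → ℕ)
    (U ε : ℝ) (hU : 0 < U) (hε : 0 < ε)
    (T : ℝ) (hT : T = kthLargest (fun ℓ => U * (m ℓ : ℝ)) ⌈(2 : ℝ) / ε⌉₊) :
    Admissible m U (fun ℓ _ => max ((U * (m ℓ : ℝ) - T) / (2 * (m ℓ : ℝ))) 0)
      (fun ℓ _ => min ((U * (m ℓ : ℝ) + T) / (2 * (m ℓ : ℝ))) U) ∧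
    ∀ a b, Admissible m U a b →
      E1 m U ε (fun ℓ _ => max ((U * (m ℓ : ℝ) - T) / (2 * (m ℓ : ℝ))) 0)
        (fun ℓ _ => min ((U * (m ℓ : ℝ) + T) / (2 * (m ℓ : ℝ))) U) ≤ E1 m U ε a b := by
  have hv : ∀ ℓ, 0 ≤ U * (m ℓ : ℝ) := fun ℓ => by positivity
  have hT0 : 0 ≤ T := hT ▸ kthLargest_nonneg _ hv _
  have hsup : sSup (Set.range fun ℓ => min T (U * m ℓ)) = T :=
    hT ▸ sSup_range_min_kthLargest _ hv (Nat.one_le_ceil_iff.2 (by positivity))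
  have hlower : (fun ℓ (_ : Fin (m ℓ)) => max ((U * (m ℓ : ℝ) - T) / (2 * (m ℓ : ℝ))) 0) =
      fun ℓ _ => (U - min T (U * m ℓ) / m ℓ) / 2 := by
    funext ℓ j
    exact max_sub_div_two_eq (Nat.cast_pos.2 j.pos)
  have hupper : (fun ℓ (_ : Fin (m ℓ)) => min ((U * (m ℓ : ℝ) + T) / (2 * (m ℓ : ℝ))) U) =
      fun ℓ _ => (U + min T (U * m ℓ) / m ℓ) / 2 := by
    funext ℓ j
    exact min_add_div_two_eq (Nat.cast_pos.2 j.pos)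
  rw [hlower, hupper, E1_symmetric_min m U ε hT0 hsup]
  refine ⟨admissible_symmetric_min m U hU.le hT0, fun a b hab => ?_⟩
  have hS : 0 ≤ sSup (Set.range fun ℓ => ∑ j, (b ℓ j - a ℓ j)) := Real.sSup_nonneg <| by
    rintro _ ⟨ℓ, rfl⟩
    exact sum_nonneg fun j _ => sub_nonneg.2 (hab ℓ j).2.1
  calc thresholdError m U ε T ≤ thresholdError m U ε _ :=
        hT ▸ thresholdError_kthLargest_le m U ε hε hS
    _ ≤ E1 m U ε a b := thresholdError_sSup_le_E1 m U ε hab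

/-- Theorem 2 of the paper, case `d = 1`.
With `T` the `⌈2/ε⌉`-th largest value of `{U·m_1, …, U·m_L}` (and `T = 0` if `⌈2/ε⌉ > L`),
the strategy `a_j^{(ℓ)} = max{(U m_ℓ − T)/(2 m_ℓ), 0}`, `b_j^{(ℓ)} = min{(U m_ℓ + T)/(2 m_ℓ), U}`
is admissible and minimizes `E^(1)` over all admissible clipping strategies. -/
theorem stmt0 {L : ℕ} (hL : 0 < L) (m : Fin L → ℕ) (hm : ∀ ℓ, 1 ≤ m ℓ)
    (U ε : ℝ) (hU : 0 < U) (hε : 0 < ε)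
    (T : ℝ) (hT : T = kthLargest (fun ℓ => U * (m ℓ : ℝ)) ⌈(2 : ℝ) / ε⌉₊) :
    Admissible m U (fun ℓ _ => max ((U * (m ℓ : ℝ) - T) / (2 * (m ℓ : ℝ))) 0)
      (fun ℓ _ => min ((U * (m ℓ : ℝ) + T) / (2 * (m ℓ : ℝ))) U) ∧
    ∀ a b, Admissible m U a b →
      E1 m U ε (fun ℓ _ => max ((U * (m ℓ : ℝ) - T) / (2 * (m ℓ : ℝ))) 0)
        (fun ℓ _ => min ((U * (m ℓ : ℝ) + T) / (2 * (m ℓ : ℝ))) U) ≤ E1 m U ε a b :=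
  stmt0_general m U ε hU hε T hT
end

section
/- Let L ≥ 1, m_ℓ ≥ 1 for ℓ ∈ [L], U > 0, ε > 0. For every admissible clipping strategy {a_j^{(ℓ)}, b_j^{(ℓ)}} there exists an admissible clipping strategy {a'_j^{(ℓ)}, b'_j^{(ℓ)}} satisfying a'_j^{(ℓ)} + b'_j^{(ℓ)} = U for all ℓ ∈ [L], j ∈ [m_ℓ], such that E^{(1)}({a'_j^{(ℓ)}, b'_j^{(ℓ)}}) ≤ E^{(1)}({a_j^{(ℓ)}, b_j^{(ℓ)}}). Consequently, the minimum of E^{(1)} over all admissible strategies is attained by a strategy with a_j^{(ℓ)} + b_j^{(ℓ)} = U for all ℓ, j. -/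
open Finset

/-!
Translating a clipping interval `[a, b] ⊆ [0, U]` so that it becomes centred at `U / 2` keeps
its width, hence the privacy term of `E1`, and replaces the clipping bias `max a (U - b)` by
the average `(a + (U - b)) / 2`, which is no larger. A minimiser exists because `E1` is
continuous on the compact set of admissible strategies, and centring it gives a centred one.
-/

theorem Continuous.ciSup_of_finite {ι X α : Type*} [Finite ι] [TopologicalSpace X]
    [ConditionallyCompleteLattice α] [TopologicalSpace α] [ContinuousSup α]
    {f : ι → X → α} (hf : ∀ i, Continuous (f i)) : Continuous fun x => ⨆ i, f i x := by
  cases isEmpty_or_nonempty ι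
  · simp only [iSup, Set.range_eq_empty]
    exact continuous_const
  · have := Fintype.ofFinite ι
    simp only [← Finset.sup'_univ_eq_ciSup]
    exact Continuous.finset_sup'_apply univ_nonempty fun i _ => hf i

section ClippingStrategy

variable {L : ℕ} (m : Fin L → ℕ) (U ε : ℝ)

abbrev SampleVector := (ℓ : Fin L) → Fin (m ℓ) → ℝ

/-- Lower end of the interval `[a, b]` translated to be centred at `U / 2`. -/
noncomputable def centerLo (a b : SampleVector m) (ℓ : Fin L) (j : Fin (m ℓ)) : ℝ :=
  (a ℓ j + (U - b ℓ j)) / 2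

theorem admissible_centerLo {a b : SampleVector m} (h : Admissible m U a b) :
    Admissible m U (centerLo m U a b) (fun ℓ j => U - centerLo m U a b ℓ j) := by
  intro ℓ j
  obtain ⟨h0, hab, hbU⟩ := h ℓ j
  unfold centerLo
  refine ⟨?_, ?_, ?_⟩ <;> linarith

theorem E1_mono {a b a' b' : SampleVector m} (hε : 0 ≤ ε)
    (hmax : ∀ ℓ j, max (a' ℓ j) (U - b' ℓ j) ≤ max (a ℓ j) (U - b ℓ j))
    (hwidth : ∀ ℓ j, b' ℓ j - a' ℓ j ≤ b ℓ j - a ℓ j) :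
    E1 m U ε a' b' ≤ E1 m U ε a b := by
  have hwidth_sum : ⨆ ℓ, ∑ j, (b' ℓ j - a' ℓ j) ≤ ⨆ ℓ, ∑ j, (b ℓ j - a ℓ j) :=
    ciSup_mono (Set.finite_range _).bddAbove fun ℓ => sum_le_sum fun j _ => hwidth ℓ j
  unfold E1
  gcongr (1 / _) * (?_ + _ * ?_)
  · exact sum_le_sum fun ℓ _ => sum_le_sum fun j _ => hmax ℓ j
  · exact hwidth_sum

theorem E1_centerLo_le {a b : SampleVector m} (hε : 0 ≤ ε) :
    E1 m U ε (centerLo m U a b) (fun ℓ j => U - centerLo m U a b ℓ j) ≤ E1 m U ε a b := by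
  refine E1_mono m U ε hε (fun ℓ j => ?_) (fun ℓ j => ?_) <;> unfold centerLo
  · rw [sub_sub_cancel, max_self]
    linarith [le_max_left (a ℓ j) (U - b ℓ j), le_max_right (a ℓ j) (U - b ℓ j)]
  · linarith

theorem exists_centered_E1_le (hε : 0 ≤ ε) {a b : SampleVector m} (h : Admissible m U a b) :
    ∃ a' b', Admissible m U a' b' ∧ (∀ ℓ j, a' ℓ j + b' ℓ j = U) ∧
      E1 m U ε a' b' ≤ E1 m U ε a b :=
  ⟨_, _, admissible_centerLo m U h, fun _ _ => add_sub_cancel _ _, E1_centerLo_le m U ε hε⟩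

theorem isCompact_admissible :
    IsCompact {p : SampleVector m × SampleVector m | Admissible m U p.1 p.2} := by
  let box := Set.univ.pi fun ℓ => Set.univ.pi fun _ : Fin (m ℓ) => Set.Icc 0 U
  have hbox : IsCompact (box ×ˢ box) :=
    (isCompact_univ_pi fun _ => isCompact_univ_pi fun _ => isCompact_Icc).prod
      (isCompact_univ_pi fun _ => isCompact_univ_pi fun _ => isCompact_Icc)
  refine hbox.of_isClosed_subset ?_ fun p hp => ?_
  · simp only [Admissible, Set.ofPred_forall, Set.ofPred_and]
    refine isClosed_iInter fun ℓ => isClosed_iInter fun j => ?_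
    have ha : Continuous fun p : SampleVector m × SampleVector m => p.1 ℓ j := by fun_prop
    have hb : Continuous fun p : SampleVector m × SampleVector m => p.2 ℓ j := by fun_prop
    exact (isClosed_le continuous_const ha).inter
      ((isClosed_le ha hb).inter (isClosed_le hb continuous_const))
  · refine ⟨fun ℓ _ j _ => ?_, fun ℓ _ j _ => ?_⟩ <;> obtain ⟨h0, hab, hbU⟩ := hp ℓ j
    · exact ⟨h0, hab.trans hbU⟩
    · exact ⟨h0.trans hab, hbU⟩

theorem continuous_E1 :
    Continuous fun p : SampleVector m × SampleVector m => E1 m U ε p.1 p.2 := by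
  unfold E1
  refine continuous_const.mul (Continuous.add ?_ (continuous_const.mul ?_))
  · fun_prop
  · exact Continuous.ciSup_of_finite fun ℓ => by fun_prop

end ClippingStrategy

theorem stmt4_general {L : ℕ} (m : Fin L → ℕ)
    (U ε : ℝ) (hU : 0 < U) (hε : 0 < ε) :
    (∀ a b, Admissible m U a b →
      ∃ a' b', Admissible m U a' b' ∧ (∀ ℓ j, a' ℓ j + b' ℓ j = U) ∧
        E1 m U ε a' b' ≤ E1 m U ε a b) ∧
    (∃ a b, Admissible m U a b ∧ (∀ ℓ j, a ℓ j + b ℓ j = U) ∧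
      ∀ a' b', Admissible m U a' b' → E1 m U ε a b ≤ E1 m U ε a' b') := by
  refine ⟨fun a b h => exists_centered_E1_le m U ε hε.le h, ?_⟩
  have hne : ∃ p : SampleVector m × SampleVector m, Admissible m U p.1 p.2 :=
    ⟨(0, 0), fun _ _ => ⟨le_rfl, le_rfl, hU.le⟩⟩
  obtain ⟨p, hp, hmin⟩ :=
    (isCompact_admissible m U).exists_isMinOn hne (continuous_E1 m U ε).continuousOn
  obtain ⟨a, b, hab, hsum, hle⟩ := exists_centered_E1_le m U ε hε.le hp
  exact ⟨a, b, hab, hsum, fun a' b' h' => hle.trans (hmin (a := (a', b')) h')⟩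

/-- Lemma 5 of the paper, case `d = 1`.
Every admissible clipping strategy is dominated by an admissible strategy with
`a_j^{(ℓ)} + b_j^{(ℓ)} = U` everywhere; consequently the minimum of `E^(1)` is attained
by such a strategy. -/
theorem stmt4 {L : ℕ} (hL : 0 < L) (m : Fin L → ℕ) (hm : ∀ ℓ, 1 ≤ m ℓ)
    (U ε : ℝ) (hU : 0 < U) (hε : 0 < ε) :
    (∀ a b, Admissible m U a b →
      ∃ a' b', Admissible m U a' b' ∧ (∀ ℓ j, a' ℓ j + b' ℓ j = U) ∧
        E1 m U ε a' b' ≤ E1 m U ε a b) ∧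
    (∃ a b, Admissible m U a b ∧ (∀ ℓ j, a ℓ j + b ℓ j = U) ∧
      ∀ a' b', Admissible m U a' b' → E1 m U ε a b ≤ E1 m U ε a' b') :=
  stmt4_general m U ε hU hε
end

section
/- Let d ≥ 1, let a ∈ ℝ^d have nonnegative coordinates, and let 0 ≤ α < ‖a‖₁. Then every y ∈ Δ_α that minimizes the ℓ1-distance to a over Δ_α (i.e., ‖y − a‖₁ = inf_{z ∈ Δ_α} ‖z − a‖₁) satisfies ‖y‖₁ = α and y_i ≤ a_i for all i ∈ [d]. -/
open Finset

/-- The simplex `Δ_M ⊆ ℝ^d`: nonnegative coordinates summing to at most `M`. -/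
def simplex (d : ℕ) (M : ℝ) : Set (Fin d → ℝ) :=
  {x | (∀ i, 0 ≤ x i) ∧ ∑ i, x i ≤ M}

/-- The face `δ_M ⊆ ℝ^d`: nonnegative coordinates summing to exactly `M`. -/
def face (d : ℕ) (M : ℝ) : Set (Fin d → ℝ) :=
  {x | (∀ i, 0 ≤ x i) ∧ ∑ i, x i = M}

/-- The annulus `A_{α,β} ⊆ ℝ^d`: nonnegative coordinates with sum in `[α, β]`. -/
def annulus (d : ℕ) (α β : ℝ) : Set (Fin d → ℝ) :=
  {x | (∀ i, 0 ≤ x i) ∧ α ≤ ∑ i, x i ∧ ∑ i, x i ≤ β}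

/-- The `ℓ1`-distance from a point `x ∈ ℝ^d` to a set `S ⊆ ℝ^d`. -/
noncomputable def dist1 {d : ℕ} (x : Fin d → ℝ) (S : Set (Fin d → ℝ)) : ℝ :=
  sInf ((fun y => ∑ i, |x i - y i|) '' S)

/-- Lemma 3 of the paper.
If `a ∈ ℝ^d` has nonnegative coordinates and `0 ≤ α < ‖a‖₁`, then every `ℓ1`-projection
`y` of `a` onto `Δ_α` satisfies `‖y‖₁ = α` and `y_i ≤ a_i` for all `i`. -/
theorem stmt8 {d : ℕ} (hd : 0 < d) (a : Fin d → ℝ) (ha : ∀ i, 0 ≤ a i)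
    (α : ℝ) (hα : 0 ≤ α) (hαa : α < ∑ i, |a i|)
    (y : Fin d → ℝ) (hy : y ∈ simplex d α)
    (hmin : (∑ i, |y i - a i|) = sInf ((fun z => ∑ i, |z i - a i|) '' simplex d α)) :
    (∑ i, |y i|) = α ∧ ∀ i, y i ≤ a i := by
  have hS : ∑ i, |a i| = ∑ i, a i := by
    exact Finset.sum_congr rfl fun i _ => abs_of_nonneg (ha i)
  set S := ∑ i, a i with hSdef
  have hαS : α < S := hS ▸ hαa
  have hSpos : 0 < S := lt_of_le_of_lt hα hαS
  -- lower bound for all elements of the image set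
  have hlb : ∀ v ∈ ((fun z => ∑ i, |z i - a i|) '' simplex d α), S - α ≤ v := by
    rintro v ⟨z, hz, rfl⟩
    have h1 : ∀ i ∈ Finset.univ, a i - z i ≤ |z i - a i| := fun i _ => by
      rw [abs_sub_comm]; exact le_abs_self _
    calc S - α ≤ S - ∑ i, z i := by linarith [hz.2]
      _ = ∑ i, (a i - z i) := by rw [Finset.sum_sub_distrib]
      _ ≤ ∑ i, |z i - a i| := Finset.sum_le_sum h1
  -- witness achieving S - α
  have hwmem : (fun i => (α / S) * a i) ∈ simplex d α := by
    constructor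
    · intro i; exact mul_nonneg (div_nonneg hα hSpos.le) (ha i)
    · rw [← Finset.mul_sum, ← hSdef, div_mul_cancel₀ _ hSpos.ne']
  have hwval : (∑ i, |(α / S) * a i - a i|) = S - α := by
    have hq : α / S ≤ 1 := (div_le_one hSpos).mpr hαS.le
    have : ∀ i ∈ Finset.univ, |(α / S) * a i - a i| = a i - (α / S) * a i := by
      intro i _
      rw [abs_sub_comm, abs_of_nonneg]
      nlinarith [ha i]
    rw [Finset.sum_congr rfl this, Finset.sum_sub_distrib, ← Finset.mul_sum, ← hSdef,
      div_mul_cancel₀ _ hSpos.ne']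
  have hinf : sInf ((fun z => ∑ i, |z i - a i|) '' simplex d α) = S - α := by
    apply le_antisymm
    · exact csInf_le ⟨S - α, fun v hv => hlb v hv⟩
        (hwval ▸ Set.mem_image_of_mem _ hwmem)
    · exact le_csInf ⟨_, Set.mem_image_of_mem _ hwmem⟩ hlb
  have hyval : (∑ i, |y i - a i|) = S - α := hmin.trans hinf
  have h1 : ∀ i ∈ Finset.univ, a i - y i ≤ |y i - a i| := fun i _ => by
    rw [abs_sub_comm]; exact le_abs_self _
  have hsum : ∑ i, y i = α := by
    have : ∑ i, (a i - y i) ≤ ∑ i, |y i - a i| := Finset.sum_le_sum h1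
    rw [Finset.sum_sub_distrib, hyval] at this
    linarith [hy.2]
  have heq : ∀ i ∈ Finset.univ, a i - y i = |y i - a i| := by
    apply (Finset.sum_eq_sum_iff_of_le h1).mp
    rw [hyval, Finset.sum_sub_distrib, hsum]
  refine ⟨?_, fun i => ?_⟩
  · rw [Finset.sum_congr rfl fun i _ => abs_of_nonneg (hy.1 i), hsum]
  · have := heq i (Finset.mem_univ i)
    have h2 : 0 ≤ |y i - a i| := abs_nonneg _
    linarith
end

section
/- Let d ≥ 1, let a ∈ ℝ^d have nonnegative coordinates, and let 0 ≤ α < ‖a‖₁. Then a point y ∈ Δ_α minimizes the ℓ1-distance to a over Δ_α if and only if ∑_{i≤d} y_i = α and 0 ≤ y_i ≤ a_i for all i ∈ [d]. -/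
open Finset

/-- characterization of `ℓ1`-projections onto `Δ_α`.
If `a ∈ ℝ^d` has nonnegative coordinates and `0 ≤ α < ‖a‖₁`, then `y ∈ Δ_α` minimizes the
`ℓ1`-distance to `a` over `Δ_α` iff `∑_i y_i = α` and `0 ≤ y_i ≤ a_i` for all `i`. -/
theorem stmt9 {d : ℕ} (hd : 0 < d) (a : Fin d → ℝ) (ha : ∀ i, 0 ≤ a i)
    (α : ℝ) (hα : 0 ≤ α) (hαa : α < ∑ i, |a i|)
    (y : Fin d → ℝ) (hy : y ∈ simplex d α) :
    ((∑ i, |y i - a i|) = sInf ((fun z => ∑ i, |z i - a i|) '' simplex d α)) ↔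
      ((∑ i, y i) = α ∧ ∀ i, 0 ≤ y i ∧ y i ≤ a i) := by
  have hsum : ∑ i, |a i| = ∑ i, a i := Finset.sum_congr rfl fun i _ => abs_of_nonneg (ha i)
  rw [hsum] at hαa
  have hlow : ∀ z ∈ simplex d α, ∑ i, a i - α ≤ ∑ i, |z i - a i| := by
    intro z hz
    have h1 : ∑ i, (a i - z i) ≤ ∑ i, |z i - a i| :=
      Finset.sum_le_sum fun i _ => by rw [abs_sub_comm]; exact le_abs_self _
    have h2 := hz.2
    rw [Finset.sum_sub_distrib] at h1
    linarith
  have hsa : 0 < ∑ i, a i := lt_of_le_of_lt hα hαa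
  set c := α / ∑ i, a i with hc
  have hc0 : 0 ≤ c := div_nonneg hα hsa.le
  have hc1 : c ≤ 1 := by rw [hc, div_le_one hsa]; exact hαa.le
  have hcs : c * ∑ i, a i = α := div_mul_cancel₀ _ hsa.ne'
  have hzmem : (fun i => c * a i) ∈ simplex d α := by
    refine ⟨fun i => mul_nonneg hc0 (ha i), le_of_eq ?_⟩
    rw [← Finset.mul_sum]; exact hcs
  have hzval : ∑ i, |c * a i - a i| = ∑ i, a i - α := by
    have h : ∀ i, |c * a i - a i| = a i - c * a i := fun i => by
      rw [abs_sub_comm, abs_of_nonneg (by nlinarith [ha i])]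
    simp_rw [h]
    rw [Finset.sum_sub_distrib, ← Finset.mul_sum, hcs]
  have hinf : sInf ((fun z => ∑ i, |z i - a i|) '' simplex d α) = ∑ i, a i - α := by
    apply le_antisymm
    · exact csInf_le ⟨∑ i, a i - α, by rintro _ ⟨z, hz, rfl⟩; exact hlow z hz⟩
        ⟨_, hzmem, hzval⟩
    · exact le_csInf ⟨_, _, hzmem, rfl⟩ (by rintro _ ⟨z, hz, rfl⟩; exact hlow z hz)
  rw [hinf]
  constructor
  · intro heq
    have hge : ∀ i, a i - y i ≤ |y i - a i| := fun i => by
      rw [abs_sub_comm]; exact le_abs_self _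
    have hsum_le : ∑ i, (a i - y i) ≤ ∑ i, |y i - a i| := Finset.sum_le_sum fun i _ => hge i
    rw [Finset.sum_sub_distrib] at hsum_le
    have hy2 := hy.2
    have hyle : ∑ i, y i = α := by linarith
    refine ⟨hyle, fun i => ⟨hy.1 i, ?_⟩⟩
    have hzero : ∑ j, (|y j - a j| - (a j - y j)) = 0 := by
      rw [Finset.sum_sub_distrib, Finset.sum_sub_distrib]
      linarith
    have hterm := (Finset.sum_eq_zero_iff_of_nonneg
      (fun j _ => sub_nonneg.2 (hge j))).mp hzero i (Finset.mem_univ i)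
    have := le_abs_self (y i - a i)
    linarith
  · rintro ⟨hsum', hbd⟩
    have h : ∀ i, |y i - a i| = a i - y i := fun i => by
      rw [abs_sub_comm, abs_of_nonneg (by linarith [(hbd i).2])]
    simp_rw [h]
    rw [Finset.sum_sub_distrib, hsum']
end

section
/- Let d ≥ 1, U > 0, and 0 ≤ α ≤ β ≤ U. Then the worst-case ℓ1 clipping error over the simplex Δ_U equals max{α, U − β}: sup_{x ∈ Δ_U} dist₁(x, A_{α,β}) = max{α, U − β}, and the supremum is attained. -/
open Finset

/-- `c` times the first standard basis vector. -/
def sgl (d : ℕ) (hd : 0 < d) (c : ℝ) : Fin d → ℝ :=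
  fun i => if i = ⟨0, hd⟩ then c else 0

lemma sgl_sum (d : ℕ) (hd : 0 < d) (c : ℝ) : ∑ i, sgl d hd c i = c := by
  simp [sgl]

lemma sgl_nonneg (d : ℕ) (hd : 0 < d) (c : ℝ) (hc : 0 ≤ c) (i : Fin d) :
    0 ≤ sgl d hd c i := by
  unfold sgl; split <;> simp [hc]

lemma dist1_le_of_mem {d : ℕ} (x y : Fin d → ℝ) (S : Set (Fin d → ℝ)) (hy : y ∈ S) :
    dist1 x S ≤ ∑ i, |x i - y i| := by
  apply csInf_le
  · exact ⟨0, by rintro _ ⟨z, hz, rfl⟩; positivity⟩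
  · exact ⟨y, hy, rfl⟩

lemma le_dist1 {d : ℕ} (x : Fin d → ℝ) (S : Set (Fin d → ℝ)) (c : ℝ)
    (hne : S.Nonempty) (h : ∀ y ∈ S, c ≤ ∑ i, |x i - y i|) : c ≤ dist1 x S := by
  apply le_csInf (hne.image _)
  rintro _ ⟨y, hy, rfl⟩; exact h y hy

lemma sgl_mem_annulus {d : ℕ} (hd : 0 < d) (α β c : ℝ) (hc : α ≤ c) (hc0 : 0 ≤ c)
    (hcβ : c ≤ β) : sgl d hd c ∈ annulus d α β :=
  ⟨sgl_nonneg d hd c hc0, by rw [sgl_sum]; exact hc, by rw [sgl_sum]; exact hcβ⟩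

/-- worst-case `ℓ1` clipping error over the simplex; Lemma 4 of the paper.
For `0 ≤ α ≤ β ≤ U`, the supremum over `x ∈ Δ_U` of the `ℓ1`-distance from `x` to the
annulus `A_{α,β}` equals `max{α, U − β}`, and the supremum is attained. -/
theorem stmt14 {d : ℕ} (hd : 0 < d) (U α β : ℝ) (hU : 0 < U)
    (h0 : 0 ≤ α) (hαβ : α ≤ β) (hβU : β ≤ U) :
    IsGreatest ((fun x => dist1 x (annulus d α β)) '' simplex d U) (max α (U - β)) := by
  have hβ0 : 0 ≤ β := le_trans h0 hαβ
  have hAne : (annulus d α β).Nonempty := ⟨_, sgl_mem_annulus hd α β α le_rfl h0 hαβ⟩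
  constructor
  · -- attainment
    rcases le_or_gt (U - β) α with hc | hc
    · rw [max_eq_left hc]
      refine ⟨0, ⟨fun i => le_rfl, by simp; linarith⟩, ?_⟩
      apply le_antisymm
      · have h1 := dist1_le_of_mem (0 : Fin d → ℝ) _ _
          (sgl_mem_annulus hd α β α le_rfl h0 hαβ)
        have h2 : ∑ i, |(0 : Fin d → ℝ) i - sgl d hd α i| = α := by
          have : ∀ i, |(0 : Fin d → ℝ) i - sgl d hd α i| = sgl d hd α i := by
            intro i
            simp [abs_of_nonneg (sgl_nonneg d hd α h0 i)]
          rw [Finset.sum_congr rfl fun i _ => this i, sgl_sum]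
        rw [h2] at h1; exact h1
      · apply le_dist1 _ _ _ hAne
        intro y hy
        have : ∑ i, |(0 : Fin d → ℝ) i - y i| = ∑ i, y i := by
          apply Finset.sum_congr rfl
          intro i _
          simp [abs_of_nonneg (hy.1 i)]
        rw [this]; exact hy.2.1
    · rw [max_eq_right hc.le]
      refine ⟨sgl d hd U, ⟨sgl_nonneg d hd U hU.le, by rw [sgl_sum]⟩, ?_⟩
      apply le_antisymm
      · have h1 := dist1_le_of_mem (sgl d hd U) _ _
          (sgl_mem_annulus hd α β β hαβ hβ0 le_rfl)
        have h2 : ∑ i, |sgl d hd U i - sgl d hd β i| = U - β := by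
          have : ∀ i, |sgl d hd U i - sgl d hd β i| = sgl d hd (U - β) i := by
            intro i
            unfold sgl
            split
            · rw [abs_of_nonneg (by linarith)]
            · simp
          rw [Finset.sum_congr rfl fun i _ => this i, sgl_sum]
        rw [h2] at h1; exact h1
      · apply le_dist1 _ _ _ hAne
        intro y hy
        have habs : |∑ i, (sgl d hd U i - y i)| ≤ ∑ i, |sgl d hd U i - y i| :=
          Finset.abs_sum_le_sum_abs _ _
        rw [Finset.sum_sub_distrib, sgl_sum] at habs
        have := hy.2.2
        calc U - β ≤ U - ∑ i, y i := by linarith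
          _ ≤ |U - ∑ i, y i| := le_abs_self _
          _ ≤ _ := habs
  · -- upper bound
    rintro r ⟨x, hx, rfl⟩
    obtain ⟨hx0, hxU⟩ := hx
    have hs0 : 0 ≤ ∑ i, x i := Finset.sum_nonneg fun i _ => hx0 i
    have hmax0 : (0:ℝ) ≤ max α (U - β) := le_trans h0 (le_max_left _ _)
    rcases le_or_gt (∑ i, x i) β with h1 | h1
    · rcases le_or_gt α (∑ i, x i) with h2 | h2
      · have := dist1_le_of_mem x x (annulus d α β) ⟨hx0, h2, h1⟩
        simpa using le_trans (by simpa using this) hmax0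
      · -- sum < α : add (α - s) to first coordinate
        set y := fun i => x i + sgl d hd (α - ∑ j, x j) i with hy
        have hymem : y ∈ annulus d α β := by
          refine ⟨fun i => ?_, ?_, ?_⟩
          · exact add_nonneg (hx0 i) (sgl_nonneg d hd _ (by linarith) i)
          · rw [hy]; simp only [Finset.sum_add_distrib, sgl_sum]; linarith
          · rw [hy]; simp only [Finset.sum_add_distrib, sgl_sum]; linarith
        have hdist : ∑ i, |x i - y i| = α - ∑ j, x j := by
          have : ∀ i, |x i - y i| = sgl d hd (α - ∑ j, x j) i := by
            intro i
            rw [hy]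
            rw [show x i - (x i + sgl d hd (α - ∑ j, x j) i)
              = -(sgl d hd (α - ∑ j, x j) i) by ring, abs_neg,
              abs_of_nonneg (sgl_nonneg d hd _ (by linarith) i)]
          rw [Finset.sum_congr rfl fun i _ => this i, sgl_sum]
        have := dist1_le_of_mem x y _ hymem
        rw [hdist] at this
        calc dist1 x (annulus d α β) ≤ α - ∑ j, x j := this
          _ ≤ α := by linarith
          _ ≤ _ := le_max_left _ _
    · -- sum > β : scale down
      have hspos : 0 < ∑ i, x i := lt_of_le_of_lt hβ0 h1
      set y := fun i => (β / ∑ j, x j) * x i with hy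
      have hratio0 : 0 ≤ β / ∑ j, x j := div_nonneg hβ0 hs0
      have hratio1 : β / ∑ j, x j ≤ 1 := by
        rw [div_le_one hspos]; exact h1.le
      have hysum : ∑ i, y i = β := by
        rw [hy, ← Finset.mul_sum, div_mul_cancel₀ _ hspos.ne']
      have hymem : y ∈ annulus d α β := by
        exact ⟨fun i => mul_nonneg hratio0 (hx0 i), by rw [hysum]; exact hαβ, by rw [hysum]⟩
      have hdist : ∑ i, |x i - y i| = ∑ i, x i - β := by
        have : ∀ i, |x i - y i| = (1 - β / ∑ j, x j) * x i := by
          intro i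
          rw [hy, show x i - β / (∑ j, x j) * x i = (1 - β / ∑ j, x j) * x i by ring,
            abs_of_nonneg (mul_nonneg (by linarith) (hx0 i))]
        rw [Finset.sum_congr rfl fun i _ => this i, ← Finset.mul_sum, sub_mul, one_mul,
          div_mul_cancel₀ _ hspos.ne']
      have := dist1_le_of_mem x y _ hymem
      rw [hdist] at this
      calc dist1 x (annulus d α β) ≤ ∑ i, x i - β := this
        _ ≤ U - β := by linarith
        _ ≤ _ := le_max_right _ _
end

section
/- Let L ≥ 1, m_ℓ ≥ 1 for ℓ ∈ [L], M := ∑_ℓ m_ℓ, U > 0, ε > 0, and suppose ⌈2/ε⌉ > L (so that T_ε = 0). Then the minimum of the worst-case error functional E^{(1)} over all admissible clipping strategies equals U/2. -/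
open Finset

/-- limit `ε → 0`, case `d = 1`.
If `⌈2/ε⌉ > L` (so that `T_ε = 0`), the minimum of `E^(1)` over all admissible clipping
strategies equals `U/2`. -/
theorem stmt18 {L : ℕ} (hL : 0 < L) (m : Fin L → ℕ) (hm : ∀ ℓ, 1 ≤ m ℓ)
    (U ε : ℝ) (hU : 0 < U) (hε : 0 < ε) (hceil : L < ⌈(2 : ℝ) / ε⌉₊) :
    IsLeast {e : ℝ | ∃ a b, Admissible m U a b ∧ e = E1 m U ε a b} (U / 2) := by
  haveI hne : Nonempty (Fin L) := Fin.pos_iff_nonempty.mp hL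
  have hM : (0:ℝ) < ∑ ℓ, (m ℓ : ℝ) := by
    apply Finset.sum_pos
    · intro i _; exact_mod_cast hm i
    · exact Finset.univ_nonempty
  constructor
  · refine ⟨fun _ _ => U/2, fun _ _ => U/2, ?_, ?_⟩
    · intro ℓ j
      refine ⟨by linarith, le_refl _, by linarith⟩
    · unfold E1
      have h2 : (U : ℝ) - U/2 = U/2 := by ring
      have hr : (Set.range fun ℓ : Fin L => ∑ _j : Fin (m ℓ), ((U/2:ℝ) - U/2)) = {0} := by
        have : (fun ℓ : Fin L => ∑ _j : Fin (m ℓ), ((U/2:ℝ) - U/2)) = fun _ => 0 := by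
          funext ℓ; simp
        rw [this, Set.range_const]
      rw [hr, csSup_singleton]
      simp only [mul_zero, add_zero, h2, max_self, Finset.sum_const, Finset.card_univ,
        Fintype.card_fin, nsmul_eq_mul]
      rw [← Finset.sum_mul]
      field_simp
  · rintro e ⟨a, b, hab, rfl⟩
    set S := sSup (Set.range fun ℓ => ∑ j, (b ℓ j - a ℓ j)) with hSdef
    have hbdd : BddAbove (Set.range fun ℓ => ∑ j, (b ℓ j - a ℓ j)) :=
      (Set.finite_range _).bddAbove
    have hS : ∀ ℓ, ∑ j, (b ℓ j - a ℓ j) ≤ S := fun ℓ =>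
      le_csSup hbdd (Set.mem_range_self ℓ)
    have hS0 : 0 ≤ S := by
      obtain ⟨ℓ₀⟩ := hne
      refine le_trans ?_ (hS ℓ₀)
      apply Finset.sum_nonneg
      intro j _
      have := hab ℓ₀ j
      linarith [this.1, this.2.1]
    have hT : ∑ ℓ, ∑ j, (b ℓ j - a ℓ j) ≤ (L : ℝ) * S := by
      calc ∑ ℓ, ∑ j, (b ℓ j - a ℓ j) ≤ ∑ _ℓ : Fin L, S :=
            Finset.sum_le_sum fun ℓ _ => hS ℓ
        _ = (L : ℝ) * S := by simp [mul_comm]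
    have hLε : (L : ℝ) < 2 / ε := Nat.lt_ceil.mp hceil
    have hLε2 : (L : ℝ) * ε < 2 := (lt_div_iff₀ hε).mp hLε
    have hinv : (L : ℝ) / 2 * S ≤ (1/ε) * S := by
      apply mul_le_mul_of_nonneg_right _ hS0
      rw [div_le_div_iff₀ (by norm_num : (0:ℝ) < 2) hε]
      linarith
    have hmaxsum : ∀ ℓ : Fin L, ∑ j : Fin (m ℓ), ((m ℓ:ℝ) * 0 + 0) = 0 := by intro ℓ; simp
    have hmax : (∑ ℓ, (m ℓ : ℝ)) * U - ∑ ℓ, ∑ j, (b ℓ j - a ℓ j) ≤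
        2 * ∑ ℓ, ∑ j, max (a ℓ j) (U - b ℓ j) := by
      have h1 : ∀ ℓ : Fin L, ∀ j : Fin (m ℓ),
          U - (b ℓ j - a ℓ j) ≤ 2 * max (a ℓ j) (U - b ℓ j) := by
        intro ℓ j
        have h2 := le_max_left (a ℓ j) (U - b ℓ j)
        have h3 := le_max_right (a ℓ j) (U - b ℓ j)
        linarith
      calc (∑ ℓ, (m ℓ : ℝ)) * U - ∑ ℓ, ∑ j, (b ℓ j - a ℓ j)
          = ∑ ℓ, ∑ j : Fin (m ℓ), (U - (b ℓ j - a ℓ j)) := by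
            rw [Finset.sum_mul]
            rw [← Finset.sum_sub_distrib]
            congr 1
            funext ℓ
            rw [Finset.sum_sub_distrib]
            simp [mul_comm]
        _ ≤ ∑ ℓ, ∑ j, 2 * max (a ℓ j) (U - b ℓ j) := by
            apply Finset.sum_le_sum; intro ℓ _
            exact Finset.sum_le_sum fun j _ => h1 ℓ j
        _ = 2 * ∑ ℓ, ∑ j, max (a ℓ j) (U - b ℓ j) := by
            rw [Finset.mul_sum]; congr 1; funext ℓ; rw [Finset.mul_sum]
    unfold E1
    rw [← hSdef]
    rw [one_div, inv_mul_eq_div, le_div_iff₀ hM]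
    have hTS : ∑ ℓ, ∑ j, (b ℓ j - a ℓ j) ≤ 2 * ((1/ε) * S) := by
      have : (L:ℝ) * S = 2 * ((L:ℝ)/2 * S) := by ring
      nlinarith
    nlinarith
end
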